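/- arXiv:2204.06716 — 3 statements merged into one kernel-verified Lean document; each statement's English description precedes it below -/
import Mathlib

section
/- Let x, x*, â be differentiable curves with x(t), x*(t) ∈ ℝⁿ and â(t) ∈ ℝᵖ, let u, u*, ū be curves with values in ℝᵐ, let a ∈ ℝᵖ be a fixed vector, and let Γ ∈ ℝ^{p×p} be a symmetric positive-definite matrix. Suppose that for all t: (i) ẋ(t) = f(x(t)) + B(x(t))(u(t) + Y(x(t))a); (ii) ẋ*(t) = f(x*(t)) + B(x*(t))u*(t); (iii) u(t) = ū(t) − Y(x(t))â(t); and (iv) â̇(t) = Γ Y(x(t))ᵀ B(x(t))ᵀ ∇ₓV̄(x(t), x*(t)). Define V(t) = V̄(x(t), x*(t)) + ½ (â(t) − a)ᵀ Γ⁻¹ (â(t) − a). Then for all t, V̇(t) = ∇ₓV̄(x(t),x*(t))ᵀ (f(x(t)) + B(x(t))ū(t)) + ∇_{x*}V̄(x(t),x*(t))ᵀ (f(x*(t)) + B(x*(t))u*(t)). -/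
open Matrix

/-! Since `Γ⁻¹` is symmetric, `½‖â − a‖²_{Γ⁻¹}` has derivative `(â − a)ᵀ Γ⁻¹ â̇`, which the
adaptation law turns into `(â − a)ᵀ Yᵀ Bᵀ ∇ₓV̄ = ∇ₓV̄ᵀ B Y (â − a)`. Under the feedback law the true
dynamics read `ẋ = f + B ū − B Y (â − a)`, so by the chain rule for `V̄` this term cancels exactly
the parameter-error part of `∇ₓV̄ᵀ ẋ`. -/

section

variable {𝕜 ι : Type*} [NontriviallyNormedField 𝕜] [Fintype ι]
  {u v : 𝕜 → ι → 𝕜} {u' v' : ι → 𝕜} {t : 𝕜}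

theorem HasDerivAt.dotProduct (hu : HasDerivAt u u' t) (hv : HasDerivAt v v' t) :
    HasDerivAt (fun s => u s ⬝ᵥ v s) (u' ⬝ᵥ v t + u t ⬝ᵥ v') t := by
  have h := HasDerivAt.fun_sum (u := Finset.univ) fun i _ =>
    (hasDerivAt_pi.mp hu i).mul (hasDerivAt_pi.mp hv i)
  rwa [Finset.sum_add_distrib] at h

theorem HasDerivAt.const_mulVec {κ : Type*} (M : Matrix κ ι 𝕜) (hu : HasDerivAt u u' t) :
    HasDerivAt (fun s => M *ᵥ u s) (M *ᵥ u') t :=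
  hasDerivAt_pi.mpr fun _ => HasDerivAt.fun_sum fun j _ => (hasDerivAt_pi.mp hu j).const_mul _

theorem HasDerivAt.dotProduct_mulVec_self {M : Matrix ι ι 𝕜} (hM : M.IsSymm)
    (hu : HasDerivAt u u' t) :
    HasDerivAt (fun s => u s ⬝ᵥ (M *ᵥ u s)) (2 * (u t ⬝ᵥ (M *ᵥ u'))) t := by
  convert hu.dotProduct (hu.const_mulVec M) using 1
  rw [← dotProduct_transpose_mulVec, hM.eq, two_mul]

end

theorem HasFDerivAt.comp_hasDerivAt_prodMk {𝕜 E F G : Type*} [NontriviallyNormedField 𝕜]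
    [NormedAddCommGroup E] [NormedSpace 𝕜 E] [NormedAddCommGroup F] [NormedSpace 𝕜 F]
    [NormedAddCommGroup G] [NormedSpace 𝕜 G] {V : E → F → G} {L : E × F →L[𝕜] G}
    {x : 𝕜 → E} {y : 𝕜 → F} {x' : E} {y' : F} {t : 𝕜}
    (hV : HasFDerivAt (fun q : E × F => V q.1 q.2) L (x t, y t))
    (hx : HasDerivAt x x' t) (hy : HasDerivAt y y' t) :
    HasDerivAt (fun s => V (x s) (y s)) (L (x', 0) + L (0, y')) t := by
  rw [← map_add, Prod.mk_add_mk, add_zero, zero_add]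
  exact hV.comp_hasDerivAt t (hx.prodMk hy)

theorem dotProduct_matchedUncertainty_add_adaptation {R ι κ μ : Type*} [CommRing R]
    [Fintype ι] [Fintype κ] [Fintype μ] (g f : ι → R) (B : Matrix ι κ R) (Y : Matrix κ μ R)
    (ubar : κ → R) (ahat a : μ → R) :
    g ⬝ᵥ (f + B *ᵥ (ubar - Y *ᵥ ahat + Y *ᵥ a)) + (ahat - a) ⬝ᵥ (Yᵀ *ᵥ (Bᵀ *ᵥ g))
      = g ⬝ᵥ (f + B *ᵥ ubar) := by
  rw [dotProduct_transpose_mulVec, dotProduct_comm (Bᵀ *ᵥ g), dotProduct_transpose_mulVec]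
  simp only [mulVec_add, mulVec_sub, dotProduct_add, dotProduct_sub]
  ring

theorem adaptive_control_affine_lyapunov_rate_general
    {n m p : ℕ}
    (f : (Fin n → ℝ) → (Fin n → ℝ))
    (B : (Fin n → ℝ) → Matrix (Fin n) (Fin m) ℝ)
    (Y : (Fin n → ℝ) → Matrix (Fin m) (Fin p) ℝ)
    (Vbar : (Fin n → ℝ) → (Fin n → ℝ) → ℝ)
    (gradx gradxs : (Fin n → ℝ) → (Fin n → ℝ) → (Fin n → ℝ))
    -- `V̄` is (continuously) differentiable, with total derivative `DV` whose
    -- partial actions are given by the gradients `∇ₓV̄` and `∇ₓ*V̄`: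
    (DV : (Fin n → ℝ) → (Fin n → ℝ) → ((Fin n → ℝ) × (Fin n → ℝ)) →L[ℝ] ℝ)
    (hDV : ∀ a b, HasFDerivAt (fun q : (Fin n → ℝ) × (Fin n → ℝ) => Vbar q.1 q.2)
      (DV a b) (a, b))
    (hDVx : ∀ a b v, DV a b (v, 0) = gradx a b ⬝ᵥ v)
    (hDVxs : ∀ a b w, DV a b (0, w) = gradxs a b ⬝ᵥ w)
    -- the curves and their derivatives:
    (x xs x' xs' : ℝ → Fin n → ℝ)
    (u us ubar : ℝ → Fin m → ℝ)
    (ahat ahat' : ℝ → Fin p → ℝ)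
    (a : Fin p → ℝ)
    (Γ : Matrix (Fin p) (Fin p) ℝ) (hΓ : Γ.PosDef)
    (hx : ∀ t, HasDerivAt x (x' t) t)
    (hxs : ∀ t, HasDerivAt xs (xs' t) t)
    (hahat : ∀ t, HasDerivAt ahat (ahat' t) t)
    -- (i) true dynamics with matched uncertainty:
    (hdyn : ∀ t, x' t = f (x t) + B (x t) *ᵥ (u t + Y (x t) *ᵥ a))
    -- (ii) nominal dynamics of the target pair:
    (hnom : ∀ t, xs' t = f (xs t) + B (xs t) *ᵥ us t)
    -- (iii) feedback law:
    (hu : ∀ t, u t = ubar t - Y (x t) *ᵥ ahat t)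
    -- (iv) adaptation law:
    (hadapt : ∀ t, ahat' t = Γ *ᵥ ((Y (x t))ᵀ *ᵥ ((B (x t))ᵀ *ᵥ gradx (x t) (xs t))))
    -- the augmented certificate:
    (V : ℝ → ℝ)
    (hV : V = fun t =>
      Vbar (x t) (xs t) + (1 / 2) * ((ahat t - a) ⬝ᵥ (Γ⁻¹ *ᵥ (ahat t - a)))) :
    ∀ t, HasDerivAt V
      (gradx (x t) (xs t) ⬝ᵥ (f (x t) + B (x t) *ᵥ ubar t)
        + gradxs (x t) (xs t) ⬝ᵥ (f (xs t) + B (xs t) *ᵥ us t)) t := by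
  intro t
  have hΓinv_symm : Γ⁻¹.IsSymm := (isHermitian_iff_isSymm.mp hΓ.isHermitian).inv
  have hΓinv_mul : Γ⁻¹ * Γ = 1 := nonsing_inv_mul Γ (isUnit_iff_ne_zero.mpr hΓ.det_pos.ne')
  have hVbar := (hDV (x t) (xs t)).comp_hasDerivAt_prodMk (hx t) (hxs t)
  rw [hDVx, hDVxs] at hVbar
  have hquad := ((hahat t).sub_const a).dotProduct_mulVec_self hΓinv_symm
  rw [hV]
  refine (hVbar.add (hquad.const_mul (1 / 2))).congr_deriv ?_
  rw [hdyn, hu, hnom, hadapt, mulVec_mulVec, hΓinv_mul, one_mulVec]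
  linarith [dotProduct_matchedUncertainty_add_adaptation (gradx (x t) (xs t)) (f (x t))
    (B (x t)) (Y (x t)) (ubar t) (ahat t) a]

/-- Adaptive control of a control-affine system with matched
uncertainty `Y(x) a` (Proposition 1, vector-parameter version): along the
closed-loop trajectory, the augmented certificate
`V(t) = V̄(x(t), x*(t)) + ½‖â(t) − a‖²_{Γ⁻¹}` evolves exactly as `V̄` would
along the nominal dynamics driven by `ū`. -/
theorem adaptive_control_affine_lyapunov_rate
    {n m p : ℕ}
    (f : (Fin n → ℝ) → (Fin n → ℝ))
    (B : (Fin n → ℝ) → Matrix (Fin n) (Fin m) ℝ)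
    (Y : (Fin n → ℝ) → Matrix (Fin m) (Fin p) ℝ)
    (hf : Continuous f) (hB : Continuous B) (hY : Continuous Y)
    (Vbar : (Fin n → ℝ) → (Fin n → ℝ) → ℝ)
    (gradx gradxs : (Fin n → ℝ) → (Fin n → ℝ) → (Fin n → ℝ))
    -- `V̄` is (continuously) differentiable, with total derivative `DV` whose
    -- partial actions are given by the gradients `∇ₓV̄` and `∇ₓ*V̄`:
    (DV : (Fin n → ℝ) → (Fin n → ℝ) → ((Fin n → ℝ) × (Fin n → ℝ)) →L[ℝ] ℝ)
    (hDV : ∀ a b, HasFDerivAt (fun q : (Fin n → ℝ) × (Fin n → ℝ) => Vbar q.1 q.2)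
      (DV a b) (a, b))
    (hDVcont : Continuous fun q : (Fin n → ℝ) × (Fin n → ℝ) => DV q.1 q.2)
    (hDVx : ∀ a b v, DV a b (v, 0) = gradx a b ⬝ᵥ v)
    (hDVxs : ∀ a b w, DV a b (0, w) = gradxs a b ⬝ᵥ w)
    -- the curves and their derivatives:
    (x xs x' xs' : ℝ → Fin n → ℝ)
    (u us ubar : ℝ → Fin m → ℝ)
    (ahat ahat' : ℝ → Fin p → ℝ)
    (a : Fin p → ℝ)
    (Γ : Matrix (Fin p) (Fin p) ℝ) (hΓ : Γ.PosDef)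
    (hx : ∀ t, HasDerivAt x (x' t) t)
    (hxs : ∀ t, HasDerivAt xs (xs' t) t)
    (hahat : ∀ t, HasDerivAt ahat (ahat' t) t)
    -- (i) true dynamics with matched uncertainty:
    (hdyn : ∀ t, x' t = f (x t) + B (x t) *ᵥ (u t + Y (x t) *ᵥ a))
    -- (ii) nominal dynamics of the target pair:
    (hnom : ∀ t, xs' t = f (xs t) + B (xs t) *ᵥ us t)
    -- (iii) feedback law:
    (hu : ∀ t, u t = ubar t - Y (x t) *ᵥ ahat t)
    -- (iv) adaptation law:
    (hadapt : ∀ t, ahat' t = Γ *ᵥ ((Y (x t))ᵀ *ᵥ ((B (x t))ᵀ *ᵥ gradx (x t) (xs t))))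
    -- the augmented certificate:
    (V : ℝ → ℝ)
    (hV : V = fun t =>
      Vbar (x t) (xs t) + (1 / 2) * ((ahat t - a) ⬝ᵥ (Γ⁻¹ *ᵥ (ahat t - a)))) :
    ∀ t, HasDerivAt V
      (gradx (x t) (xs t) ⬝ᵥ (f (x t) + B (x t) *ᵥ ubar t)
        + gradxs (x t) (xs t) ⬝ᵥ (f (xs t) + B (xs t) *ᵥ us t)) t :=
  adaptive_control_affine_lyapunov_rate_general f B Y Vbar gradx gradxs DV hDV hDVx hDVxs x xs x'
    xs' u us ubar ahat ahat' a Γ hΓ hx hxs hahat hdyn hnom hu hadapt V hV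
end

section
/- Let x, x* be differentiable curves with x(t), x*(t) ∈ ℝⁿ, let Â be a differentiable matrix-valued curve with Â(t) ∈ ℝ^{m×p}, let u, u*, ū be curves with values in ℝᵐ, let A ∈ ℝ^{m×p} be a fixed matrix, and let Γ ∈ ℝ^{m×m} be a symmetric positive-definite matrix. Suppose that for all t: (i) ẋ(t) = f(x(t)) + B(x(t))(u(t) + A y(x(t))); (ii) ẋ*(t) = f(x*(t)) + B(x*(t))u*(t); (iii) u(t) = ū(t) − Â(t) y(x(t)); and (iv) Â̇(t) = Γ B(x(t))ᵀ ∇ₓV̄(x(t),x*(t)) y(x(t))ᵀ. Define V(t) = V̄(x(t), x*(t)) + ½ tr((Â(t) − A)ᵀ Γ⁻¹ (Â(t) − A)). Then for all t, V̇(t) = ∇ₓV̄(x(t),x*(t))ᵀ (f(x(t)) + B(x(t))ū(t)) + ∇_{x*}V̄(x(t),x*(t))ᵀ (f(x*(t)) + B(x*(t))u*(t)). -/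
/-!
Write `M = Â − A`. In closed loop `ẋ = f(x) + B(x) ū − B(x) M y(x)`, so the chain rule makes
`V̄` contribute the nominal rate minus `∇ₓV̄ᵀ B M y`. Since `Γ⁻¹` is symmetric, the parameter
term has rate `tr(Mᵀ Γ⁻¹ Â̇)`, and the adaptation law `Â̇ = Γ Bᵀ ∇ₓV̄ yᵀ` turns this into
`(Bᵀ ∇ₓV̄)ᵀ M y`, which cancels the mismatch exactly.
-/

open Matrix

section MatrixCalculus

variable {l m n : Type*} [Fintype m] {t : ℝ}

theorem Matrix.hasDerivAt_mul_apply {P : ℝ → Matrix l m ℝ} {R : ℝ → Matrix m n ℝ}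
    {P' : Matrix l m ℝ} {R' : Matrix m n ℝ}
    (hP : ∀ i j, HasDerivAt (fun τ => P τ i j) (P' i j) t)
    (hR : ∀ i j, HasDerivAt (fun τ => R τ i j) (R' i j) t) (i : l) (k : n) :
    HasDerivAt (fun τ => (P τ * R τ) i k) ((P' * R t + P t * R') i k) t := by
  simp only [mul_apply, add_apply, ← Finset.sum_add_distrib]
  exact HasDerivAt.fun_sum fun j _ => (hP i j).mul (hR j k)

theorem Matrix.hasDerivAt_trace {M : ℝ → Matrix m m ℝ} {M' : Matrix m m ℝ}
    (hM : ∀ i j, HasDerivAt (fun τ => M τ i j) (M' i j) t) :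
    HasDerivAt (fun τ => trace (M τ)) (trace M') t :=
  HasDerivAt.fun_sum fun i _ => hM i i

theorem Matrix.hasDerivAt_trace_transpose_mul_mul [Fintype n] {P : ℝ → Matrix m n ℝ}
    {P' : Matrix m n ℝ} {Q : Matrix m m ℝ} (hQ : Qᵀ = Q)
    (hP : ∀ i j, HasDerivAt (fun τ => P τ i j) (P' i j) t) :
    HasDerivAt (fun τ => trace ((P τ)ᵀ * Q * P τ)) (2 * trace ((P t)ᵀ * Q * P')) t := by
  have hPQ := hasDerivAt_mul_apply (P := fun τ => (P τ)ᵀ) (P' := P'ᵀ) (R := fun _ => Q)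
    (R' := 0) (fun i j => hP j i) (fun _ _ => hasDerivAt_const t _)
  refine (hasDerivAt_trace (hasDerivAt_mul_apply hPQ hP)).congr_deriv ?_
  have hsymm : trace (P'ᵀ * Q * P t) = trace ((P t)ᵀ * Q * P') := by
    rw [← trace_transpose, transpose_mul, transpose_mul, transpose_transpose, hQ,
      Matrix.mul_assoc]
  simp [hsymm, two_mul]

end MatrixCalculus

theorem Matrix.trace_transpose_mul_vecMulVec {R m n : Type*} [CommSemiring R] [Fintype m]
    [Fintype n] (M : Matrix m n R) (v : m → R) (w : n → R) :
    trace (Mᵀ * vecMulVec v w) = v ⬝ᵥ (M *ᵥ w) := by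
  rw [mul_vecMulVec, trace_vecMulVec, mulVec_transpose, dotProduct_mulVec]

theorem Matrix.trace_transpose_mul_inv_mul_vecMulVec {R m n : Type*} [CommRing R] [Fintype m]
    [DecidableEq m] [Fintype n] {G : Matrix m m R} (hG : IsUnit G.det) (M : Matrix m n R)
    (v : m → R) (w : n → R) :
    trace (Mᵀ * G⁻¹ * vecMulVec (G *ᵥ v) w) = v ⬝ᵥ (M *ᵥ w) := by
  rw [Matrix.mul_assoc, mul_vecMulVec, mulVec_mulVec, nonsing_inv_mul _ hG, one_mulVec,
    trace_transpose_mul_vecMulVec]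

theorem hasDerivAt_comp_of_partial_gradients {ι κ : Type*} [Fintype ι] [Fintype κ]
    {V : (ι → ℝ) → (κ → ℝ) → ℝ} {D : ((ι → ℝ) × (κ → ℝ)) →L[ℝ] ℝ} {g₁ : ι → ℝ} {g₂ : κ → ℝ}
    {x : ℝ → ι → ℝ} {y : ℝ → κ → ℝ} {x' : ι → ℝ} {y' : κ → ℝ} {t : ℝ}
    (hD : HasFDerivAt (fun q => V q.1 q.2) D (x t, y t))
    (hD₁ : ∀ v, D (v, 0) = g₁ ⬝ᵥ v) (hD₂ : ∀ w, D (0, w) = g₂ ⬝ᵥ w)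
    (hx : HasDerivAt x x' t) (hy : HasDerivAt y y' t) :
    HasDerivAt (fun τ => V (x τ) (y τ)) (g₁ ⬝ᵥ x' + g₂ ⬝ᵥ y') t := by
  refine (hD.comp_hasDerivAt t (hx.prodMk hy)).congr_deriv ?_
  rw [← D.comp_inl_add_comp_inr]
  simp [hD₁, hD₂]

theorem adaptive_control_affine_features_lyapunov_rate_general
    {n m p : ℕ}
    (f : (Fin n → ℝ) → (Fin n → ℝ))
    (B : (Fin n → ℝ) → Matrix (Fin n) (Fin m) ℝ)
    (y : (Fin n → ℝ) → (Fin p → ℝ))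
    (Vbar : (Fin n → ℝ) → (Fin n → ℝ) → ℝ)
    (gradx gradxs : (Fin n → ℝ) → (Fin n → ℝ) → (Fin n → ℝ))
    -- `V̄` is (continuously) differentiable, with total derivative `DV` whose
    -- partial actions are given by the gradients `∇ₓV̄` and `∇ₓ*V̄`:
    (DV : (Fin n → ℝ) → (Fin n → ℝ) → ((Fin n → ℝ) × (Fin n → ℝ)) →L[ℝ] ℝ)
    (hDV : ∀ a b, HasFDerivAt (fun q : (Fin n → ℝ) × (Fin n → ℝ) => Vbar q.1 q.2)
      (DV a b) (a, b))
    (hDVx : ∀ a b v, DV a b (v, 0) = gradx a b ⬝ᵥ v)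
    (hDVxs : ∀ a b w, DV a b (0, w) = gradxs a b ⬝ᵥ w)
    -- the curves and their derivatives:
    (x xs x' xs' : ℝ → Fin n → ℝ)
    (u us ubar : ℝ → Fin m → ℝ)
    (Ahat Ahat' : ℝ → Matrix (Fin m) (Fin p) ℝ)
    (A : Matrix (Fin m) (Fin p) ℝ)
    (Γ : Matrix (Fin m) (Fin m) ℝ) (hΓ : Γ.PosDef)
    (hx : ∀ t, HasDerivAt x (x' t) t)
    (hxs : ∀ t, HasDerivAt xs (xs' t) t)
    (hAhat : ∀ t i j, HasDerivAt (fun τ => Ahat τ i j) (Ahat' t i j) t)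
    -- (i) true dynamics with matched uncertainty:
    (hdyn : ∀ t, x' t = f (x t) + B (x t) *ᵥ (u t + A *ᵥ y (x t)))
    -- (ii) nominal dynamics of the target pair:
    (hnom : ∀ t, xs' t = f (xs t) + B (xs t) *ᵥ us t)
    -- (iii) feedback law:
    (hu : ∀ t, u t = ubar t - Ahat t *ᵥ y (x t))
    -- (iv) adaptation law `Â̇ = Γ B(x)ᵀ ∇ₓV̄ y(x)ᵀ`:
    (hadapt : ∀ t, Ahat' t =
      vecMulVec (Γ *ᵥ ((B (x t))ᵀ *ᵥ gradx (x t) (xs t))) (y (x t)))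
    -- the augmented certificate with the squared weighted trace norm:
    (V : ℝ → ℝ)
    (hV : V = fun t =>
      Vbar (x t) (xs t) + (1 / 2) * Matrix.trace ((Ahat t - A)ᵀ * Γ⁻¹ * (Ahat t - A))) :
    ∀ t, HasDerivAt V
      (gradx (x t) (xs t) ⬝ᵥ (f (x t) + B (x t) *ᵥ ubar t)
        + gradxs (x t) (xs t) ⬝ᵥ (f (xs t) + B (xs t) *ᵥ us t)) t := by
  intro t
  have hΓinv : (Γ⁻¹)ᵀ = Γ⁻¹ := by
    simpa [IsHermitian, conjTranspose_eq_transpose_of_trivial] using hΓ.isHermitian.inv.eq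
  have hVbar := hasDerivAt_comp_of_partial_gradients (hDV (x t) (xs t)) (hDVx _ _) (hDVxs _ _)
    (hx t) (hxs t)
  have hW := hasDerivAt_trace_transpose_mul_mul (P := fun τ => Ahat τ - A) hΓinv
    fun i j => (hAhat t i j).sub_const (A i j)
  rw [hV]
  refine (hVbar.add (hW.const_mul (1 / 2))).congr_deriv ?_
  rw [hadapt, trace_transpose_mul_inv_mul_vecMulVec hΓ.det_pos.ne'.isUnit, hdyn, hnom, hu]
  simp only [mulVec_add, mulVec_sub, sub_mulVec, dotProduct_add, dotProduct_sub,
    dotProduct_mulVec, mulVec_transpose]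
  ring

/-- Adaptive control of a control-affine system with matched
uncertainty `A y(x)` (Proposition 1, matrix-parameter version with parametric
features): along the closed-loop trajectory, the augmented certificate
`V(t) = V̄(x(t), x*(t)) + ½‖Â(t) − A‖²_{Γ⁻¹}` (squared weighted trace norm)
evolves exactly as `V̄` would along the nominal dynamics driven by `ū`. -/
theorem adaptive_control_affine_features_lyapunov_rate
    {n m p : ℕ}
    (f : (Fin n → ℝ) → (Fin n → ℝ))
    (B : (Fin n → ℝ) → Matrix (Fin n) (Fin m) ℝ)
    (y : (Fin n → ℝ) → (Fin p → ℝ))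
    (hf : Continuous f) (hB : Continuous B) (hy : Continuous y)
    (Vbar : (Fin n → ℝ) → (Fin n → ℝ) → ℝ)
    (gradx gradxs : (Fin n → ℝ) → (Fin n → ℝ) → (Fin n → ℝ))
    -- `V̄` is (continuously) differentiable, with total derivative `DV` whose
    -- partial actions are given by the gradients `∇ₓV̄` and `∇ₓ*V̄`:
    (DV : (Fin n → ℝ) → (Fin n → ℝ) → ((Fin n → ℝ) × (Fin n → ℝ)) →L[ℝ] ℝ)
    (hDV : ∀ a b, HasFDerivAt (fun q : (Fin n → ℝ) × (Fin n → ℝ) => Vbar q.1 q.2)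
      (DV a b) (a, b))
    (hDVcont : Continuous fun q : (Fin n → ℝ) × (Fin n → ℝ) => DV q.1 q.2)
    (hDVx : ∀ a b v, DV a b (v, 0) = gradx a b ⬝ᵥ v)
    (hDVxs : ∀ a b w, DV a b (0, w) = gradxs a b ⬝ᵥ w)
    -- the curves and their derivatives:
    (x xs x' xs' : ℝ → Fin n → ℝ)
    (u us ubar : ℝ → Fin m → ℝ)
    (Ahat Ahat' : ℝ → Matrix (Fin m) (Fin p) ℝ)
    (A : Matrix (Fin m) (Fin p) ℝ)
    (Γ : Matrix (Fin m) (Fin m) ℝ) (hΓ : Γ.PosDef)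
    (hx : ∀ t, HasDerivAt x (x' t) t)
    (hxs : ∀ t, HasDerivAt xs (xs' t) t)
    (hAhat : ∀ t i j, HasDerivAt (fun τ => Ahat τ i j) (Ahat' t i j) t)
    -- (i) true dynamics with matched uncertainty:
    (hdyn : ∀ t, x' t = f (x t) + B (x t) *ᵥ (u t + A *ᵥ y (x t)))
    -- (ii) nominal dynamics of the target pair:
    (hnom : ∀ t, xs' t = f (xs t) + B (xs t) *ᵥ us t)
    -- (iii) feedback law:
    (hu : ∀ t, u t = ubar t - Ahat t *ᵥ y (x t))
    -- (iv) adaptation law `Â̇ = Γ B(x)ᵀ ∇ₓV̄ y(x)ᵀ`: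
    (hadapt : ∀ t, Ahat' t =
      vecMulVec (Γ *ᵥ ((B (x t))ᵀ *ᵥ gradx (x t) (xs t))) (y (x t)))
    -- the augmented certificate with the squared weighted trace norm:
    (V : ℝ → ℝ)
    (hV : V = fun t =>
      Vbar (x t) (xs t) + (1 / 2) * Matrix.trace ((Ahat t - A)ᵀ * Γ⁻¹ * (Ahat t - A))) :
    ∀ t, HasDerivAt V
      (gradx (x t) (xs t) ⬝ᵥ (f (x t) + B (x t) *ᵥ ubar t)
        + gradxs (x t) (xs t) ⬝ᵥ (f (xs t) + B (xs t) *ᵥ us t)) t :=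
  adaptive_control_affine_features_lyapunov_rate_general f B y Vbar gradx gradxs DV hDV hDVx hDVxs x
    xs x' xs' u us ubar Ahat Ahat' A Γ hΓ hx hxs hAhat hdyn hnom hu hadapt V hV
end

section
/- Let q : ℝ → ℝ^d be twice differentiable and q* : ℝ → ℝ^d be twice differentiable, and define q̃ = q − q*, s = q̇̃ + Λq̃, v = q̇* − Λq̃, where Λ ∈ ℝ^{d×d} is positive definite. Let H : ℝ → ℝ^{d×d} be a differentiable matrix-valued curve with H(t) symmetric positive definite for all t, let C : ℝ → ℝ^{d×d}, g : ℝ → ℝ^d, y : ℝ → ℝᵖ be curves, let A ∈ ℝ^{d×p} be fixed, and let Â : ℝ → ℝ^{d×p} be differentiable. Let K ∈ ℝ^{d×d} be positive definite and Γ ∈ ℝ^{d×d} be symmetric positive definite. Assume that for all t: (i) Ḣ(t) − 2C(t) is skew-symmetric; (ii) H(t)q̈(t) + C(t)q̇(t) + g(t) = τ(t) + A y(t) with the generalized force τ(t) = H(t)v̇(t) + C(t)v(t) + g(t) − K s(t) − Â(t) y(t); and (iii) Â̇(t) = Γ s(t) y(t)ᵀ. Then for all t, d/dt [ ½ s(t)ᵀ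 H(t) s(t) + ½ tr((Â(t) − A)ᵀ Γ⁻¹ (Â(t) − A)) ] = − s(t)ᵀ K s(t). -/
/-!
Differentiating `V = ½ sᵀHs + ½ ‖Â − A‖²_{Γ⁻¹}`, the symmetry of `H` gives
`V̇ = sᵀHṡ + ½ sᵀḢs + ½ d/dt ‖Â − A‖²_{Γ⁻¹}`.
The control law turns the dynamics into `Hṡ = −Cs − Ks − (Â − A)y`, and by skew-symmetry
`½ sᵀḢs = sᵀCs`, so the first two terms add up to `−sᵀKs − sᵀ(Â − A)y`. The adaptation law
`Â̇ = Γsyᵀ` is chosen so that the parameter term contributes exactly `sᵀ(Â − A)y`.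
-/

open Matrix

namespace Matrix

variable {m n R : Type*} [Fintype m] [Fintype n]

theorem IsSymm.dotProduct_mulVec_comm [CommSemiring R] {M : Matrix n n R} (hM : M.IsSymm)
    (x y : n → R) : x ⬝ᵥ (M *ᵥ y) = y ⬝ᵥ (M *ᵥ x) := by
  rw [dotProduct_mulVec, ← mulVec_transpose, hM.eq, dotProduct_comm]

theorem dotProduct_mulVec_self_eq_zero [CommRing R] [NoZeroDivisors R] [CharZero R]
    {S : Matrix n n R} (hS : Sᵀ = -S) (x : n → R) : x ⬝ᵥ (S *ᵥ x) = 0 := by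
  refine CharZero.eq_neg_self_iff.1 ?_
  conv_lhs => rw [dotProduct_mulVec, ← mulVec_transpose, hS, neg_mulVec, neg_dotProduct,
    dotProduct_comm]

theorem trace_transpose_mul_mul_eq_sum [NonUnitalSemiring R] (P Q : Matrix m n R)
    (N : Matrix m m R) : trace (Pᵀ * N * Q) = ∑ j, Pᵀ j ⬝ᵥ (N *ᵥ Qᵀ j) := by
  simp only [dotProduct_mulVec]
  rfl

theorem trace_transpose_mul_vecMulVec_s3 [CommSemiring R] (P : Matrix m n R) (u : m → R)
    (w : n → R) : trace (Pᵀ * vecMulVec u w) = u ⬝ᵥ (P *ᵥ w) := by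
  rw [trace_mul_comm, vecMulVec_mul, trace_vecMulVec, vecMul_transpose]

end Matrix

section Calculus

variable {m n : Type*} [Fintype n] {t : ℝ}

theorem HasDerivAt.dotProduct_s3 {a b : ℝ → n → ℝ} {a' b' : n → ℝ}
    (ha : HasDerivAt a a' t) (hb : HasDerivAt b b' t) :
    HasDerivAt (fun τ => a τ ⬝ᵥ b τ) (a' ⬝ᵥ b t + a t ⬝ᵥ b') t :=
  (HasDerivAt.fun_sum (u := Finset.univ) fun i _ =>
    (hasDerivAt_pi.1 ha i).mul (hasDerivAt_pi.1 hb i)).congr_deriv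
    Finset.sum_add_distrib

theorem HasDerivAt.mulVec {M : ℝ → Matrix m n ℝ} {M' : Matrix m n ℝ} {b : ℝ → n → ℝ}
    {b' : n → ℝ} (hM : ∀ i j, HasDerivAt (fun τ => M τ i j) (M' i j) t)
    (hb : HasDerivAt b b' t) :
    HasDerivAt (fun τ => M τ *ᵥ b τ) (M' *ᵥ b t + M t *ᵥ b') t :=
  hasDerivAt_pi.2 fun i => (hasDerivAt_pi.2 (hM i)).dotProduct_s3 hb

theorem HasDerivAt.const_mulVec_s3 (M : Matrix m n ℝ) {b : ℝ → n → ℝ} {b' : n → ℝ}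
    (hb : HasDerivAt b b' t) : HasDerivAt (fun τ => M *ᵥ b τ) (M *ᵥ b') t := by
  simpa only [zero_mulVec, zero_add] using
    HasDerivAt.mulVec (M' := 0) (fun i j => hasDerivAt_const t (M i j)) hb

theorem hasDerivAt_dotProduct_mulVec_self {x : ℝ → n → ℝ} {x' : n → ℝ}
    {M : ℝ → Matrix n n ℝ} {M' : Matrix n n ℝ} (hx : HasDerivAt x x' t)
    (hM : ∀ i j, HasDerivAt (fun τ => M τ i j) (M' i j) t) (hMt : (M t).IsSymm) :
    HasDerivAt (fun τ => x τ ⬝ᵥ (M τ *ᵥ x τ))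
      (2 * (x t ⬝ᵥ (M t *ᵥ x')) + x t ⬝ᵥ (M' *ᵥ x t)) t := by
  convert hx.dotProduct_s3 (HasDerivAt.mulVec hM hx) using 1
  rw [hMt.dotProduct_mulVec_comm x' (x t), dotProduct_add]
  ring

theorem hasDerivAt_trace_transpose_mul_mul_self [Fintype m] {P : ℝ → Matrix m n ℝ}
    {P' : Matrix m n ℝ} {N : Matrix m m ℝ}
    (hP : ∀ i j, HasDerivAt (fun τ => P τ i j) (P' i j) t) (hN : N.IsSymm) :
    HasDerivAt (fun τ => trace ((P τ)ᵀ * N * P τ)) (2 * trace ((P t)ᵀ * N * P')) t := by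
  have hcol (j : n) : HasDerivAt (fun τ => (P τ)ᵀ j) (P'ᵀ j) t :=
    hasDerivAt_pi.2 fun i => hP i j
  simp only [trace_transpose_mul_mul_eq_sum, Finset.mul_sum]
  refine HasDerivAt.fun_sum fun j _ => ?_
  simpa only [zero_mulVec, dotProduct_zero, add_zero] using
    hasDerivAt_dotProduct_mulVec_self (M := fun _ => N) (M' := 0) (hcol j)
      (fun _ _ => hasDerivAt_const t _) hN

end Calculus

theorem slotine_li_features_lyapunov_rate_general
    {d p : ℕ}
    -- twice-differentiable trajectory `q` and target `q*`:
    (q qs q' qs' q'' qs'' : ℝ → Fin d → ℝ)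
    (hq : ∀ t, HasDerivAt q (q' t) t) (hq' : ∀ t, HasDerivAt q' (q'' t) t)
    (hqs : ∀ t, HasDerivAt qs (qs' t) t) (hqs' : ∀ t, HasDerivAt qs' (qs'' t) t)
    -- gains:
    (Λ K : Matrix (Fin d) (Fin d) ℝ)
    (Γ : Matrix (Fin d) (Fin d) ℝ) (hΓ : Γ.PosDef)
    -- auxiliary variables `q̃ = q − q*`, `s = q̇̃ + Λq̃`, `v = q̇* − Λq̃` and
    -- their derivatives:
    (qt s v v' : ℝ → Fin d → ℝ)
    (hqt : ∀ t, qt t = q t - qs t)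
    (hs : ∀ t, s t = (q' t - qs' t) + Λ *ᵥ qt t)
    (hv : ∀ t, v t = qs' t - Λ *ᵥ qt t)
    (hv' : ∀ t, v' t = qs'' t - Λ *ᵥ (q' t - qs' t))
    -- the dynamics terms evaluated along the trajectory, regarded as curves;
    -- `H` is differentiable with derivative `H'` and pointwise symmetric
    -- positive definite:
    (H H' C : ℝ → Matrix (Fin d) (Fin d) ℝ)
    (hH : ∀ t i j, HasDerivAt (fun τ => H τ i j) (H' t i j) t)
    (hHpd : ∀ t, (H t).PosDef)
    (g : ℝ → Fin d → ℝ) (y : ℝ → Fin p → ℝ)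
    (A : Matrix (Fin d) (Fin p) ℝ)
    (Ahat Ahat' : ℝ → Matrix (Fin d) (Fin p) ℝ)
    (hAhat : ∀ t i j, HasDerivAt (fun τ => Ahat τ i j) (Ahat' t i j) t)
    (τ : ℝ → Fin d → ℝ)
    -- (i) `Ḣ − 2C` is skew-symmetric:
    (hskew : ∀ t, (H' t - (2 : ℝ) • C t)ᵀ = -(H' t - (2 : ℝ) • C t))
    -- (ii) equations of motion with external force `A y` and the commanded
    -- generalized force:
    (hτ : ∀ t, τ t = H t *ᵥ v' t + C t *ᵥ v t + g t - K *ᵥ s t - Ahat t *ᵥ y t)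
    (hdyn : ∀ t, H t *ᵥ q'' t + C t *ᵥ q' t + g t = τ t + A *ᵥ y t)
    -- (iii) adaptation law `Â̇ = Γ s yᵀ`:
    (hadapt : ∀ t, Ahat' t = vecMulVec (Γ *ᵥ s t) (y t)) :
    ∀ t, HasDerivAt
      (fun t => (1 / 2) * (s t ⬝ᵥ (H t *ᵥ s t))
        + (1 / 2) * Matrix.trace ((Ahat t - A)ᵀ * Γ⁻¹ * (Ahat t - A)))
      (-(s t ⬝ᵥ (K *ᵥ s t))) t := by
  intro t
  have hs' : HasDerivAt s (q'' t - v' t) t := by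
    have hs_eq : s = fun τ => (q' τ - qs' τ) + Λ *ᵥ (q τ - qs τ) :=
      funext fun τ => by rw [hs, hqt]
    rw [hs_eq, hv']
    refine (((hq' t).sub (hqs' t)).add (((hq t).sub (hqs t)).const_mulVec_s3 Λ)).congr_deriv ?_
    abel
  have hclosed : H t *ᵥ (q'' t - v' t) = -(C t *ᵥ s t) - K *ᵥ s t - (Ahat t - A) *ᵥ y t := by
    have hCs : C t *ᵥ s t = C t *ᵥ q' t - C t *ᵥ v t := by
      rw [← mulVec_sub, hs, hv]
      congr 1
      abel
    have hdyn_t := hdyn t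
    rw [hτ t] at hdyn_t
    rw [hCs, mulVec_sub, sub_mulVec]
    linear_combination (norm := module) hdyn_t
  have hH'C : s t ⬝ᵥ (H' t *ᵥ s t) = 2 * (s t ⬝ᵥ (C t *ᵥ s t)) := by
    have := dotProduct_mulVec_self_eq_zero (hskew t) (s t)
    rw [sub_mulVec, dotProduct_sub, smul_mulVec, dotProduct_smul, smul_eq_mul] at this
    linarith
  have hΓinv : Γ⁻¹.IsSymm := isHermitian_iff_isSymm.1 hΓ.1.inv
  have htrace : trace ((Ahat t - A)ᵀ * Γ⁻¹ * Ahat' t) = s t ⬝ᵥ ((Ahat t - A) *ᵥ y t) := by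
    rw [hadapt, ← mul_vecMulVec, Matrix.mul_assoc,
      nonsing_inv_mul_cancel_left _ _ ((isUnit_iff_isUnit_det Γ).1 hΓ.isUnit),
      trace_transpose_mul_vecMulVec_s3]
  have hV := ((hasDerivAt_dotProduct_mulVec_self hs' (hH t)
      (isHermitian_iff_isSymm.1 (hHpd t).1)).const_mul (1 / 2)).fun_add
    ((hasDerivAt_trace_transpose_mul_mul_self (P := fun τ => Ahat τ - A)
      (fun i j => (hAhat t i j).sub_const (A i j)) hΓinv).const_mul (1 / 2))
  refine hV.congr_deriv ?_
  rw [hclosed, hH'C, htrace, dotProduct_sub, dotProduct_sub, dotProduct_neg]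
  ring

/-- Parametric-features adaptive control of a fully-actuated
Lagrangian system with external force `f_ext = A y`: the Lyapunov candidate
`V = ½ sᵀHs + ½‖Â − A‖²_{Γ⁻¹}` (squared weighted trace norm) satisfies
`V̇ = −sᵀKs`. -/
theorem slotine_li_features_lyapunov_rate
    {d p : ℕ}
    -- twice-differentiable trajectory `q` and target `q*`:
    (q qs q' qs' q'' qs'' : ℝ → Fin d → ℝ)
    (hq : ∀ t, HasDerivAt q (q' t) t) (hq' : ∀ t, HasDerivAt q' (q'' t) t)
    (hqs : ∀ t, HasDerivAt qs (qs' t) t) (hqs' : ∀ t, HasDerivAt qs' (qs'' t) t)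
    -- gains:
    (Λ K : Matrix (Fin d) (Fin d) ℝ) (hΛ : Λ.PosDef) (hK : K.PosDef)
    (Γ : Matrix (Fin d) (Fin d) ℝ) (hΓ : Γ.PosDef)
    -- auxiliary variables `q̃ = q − q*`, `s = q̇̃ + Λq̃`, `v = q̇* − Λq̃` and
    -- their derivatives:
    (qt s v v' : ℝ → Fin d → ℝ)
    (hqt : ∀ t, qt t = q t - qs t)
    (hs : ∀ t, s t = (q' t - qs' t) + Λ *ᵥ qt t)
    (hv : ∀ t, v t = qs' t - Λ *ᵥ qt t)
    (hv' : ∀ t, v' t = qs'' t - Λ *ᵥ (q' t - qs' t))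
    -- the dynamics terms evaluated along the trajectory, regarded as curves;
    -- `H` is differentiable with derivative `H'` and pointwise symmetric
    -- positive definite:
    (H H' C : ℝ → Matrix (Fin d) (Fin d) ℝ)
    (hH : ∀ t i j, HasDerivAt (fun τ => H τ i j) (H' t i j) t)
    (hHpd : ∀ t, (H t).PosDef)
    (g : ℝ → Fin d → ℝ) (y : ℝ → Fin p → ℝ)
    (A : Matrix (Fin d) (Fin p) ℝ)
    (Ahat Ahat' : ℝ → Matrix (Fin d) (Fin p) ℝ)
    (hAhat : ∀ t i j, HasDerivAt (fun τ => Ahat τ i j) (Ahat' t i j) t)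
    (τ : ℝ → Fin d → ℝ)
    -- (i) `Ḣ − 2C` is skew-symmetric:
    (hskew : ∀ t, (H' t - (2 : ℝ) • C t)ᵀ = -(H' t - (2 : ℝ) • C t))
    -- (ii) equations of motion with external force `A y` and the commanded
    -- generalized force:
    (hτ : ∀ t, τ t = H t *ᵥ v' t + C t *ᵥ v t + g t - K *ᵥ s t - Ahat t *ᵥ y t)
    (hdyn : ∀ t, H t *ᵥ q'' t + C t *ᵥ q' t + g t = τ t + A *ᵥ y t)
    -- (iii) adaptation law `Â̇ = Γ s yᵀ`:
    (hadapt : ∀ t, Ahat' t = vecMulVec (Γ *ᵥ s t) (y t)) :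
    ∀ t, HasDerivAt
      (fun t => (1 / 2) * (s t ⬝ᵥ (H t *ᵥ s t))
        + (1 / 2) * Matrix.trace ((Ahat t - A)ᵀ * Γ⁻¹ * (Ahat t - A)))
      (-(s t ⬝ᵥ (K *ᵥ s t))) t :=
  slotine_li_features_lyapunov_rate_general q qs q' qs' q'' qs'' hq hq' hqs hqs' Λ K Γ hΓ qt s v v'
    hqt hs hv hv' H H' C hH hHpd g y A Ahat Ahat' hAhat τ hskew hτ hdyn hadapt
end
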